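/- arXiv:2601.02108 — 5 statements merged into one kernel-verified Lean document; each statement's English description precedes it below -/
import Mathlib

section
/- Orthogonality preservation: Let H be an n×n real symmetric matrix, (Uₙ)ₙ, (Ûₙ₊₁)ₙ, (Ũₙ)ₙ n×N real matrices and (sₙ)ₙ real step sizes such that for every n: Ûₙ₊₁ = Uₙ − sₙ·𝒜_{Ũₙ}·Ũₙ, Ũₙ = (Uₙ + Ûₙ₊₁)/2, and Uₙ₊₁ = Ûₙ₊₁ − sₙ·H·Ûₙ₊₁·(I_N − Ûₙ₊₁ᵀ·Ûₙ₊₁). If Uₖᵀ·Uₖ = I_N for some index k, then Uₙᵀ·Uₙ = I_N for all n ≥ k; in particular, orthonormal initial data U₀ (U₀ᵀ·U₀ = I_N) yields Uₙᵀ·Uₙ = I_N for every n. -/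
/-! The predictor is an implicit-midpoint step for `U ↦ -s 𝒜 U` with skew-symmetric `𝒜`, so it
preserves the Gram matrix `Uᵀ U` exactly: writing both endpoints around the midpoint `Ũ` as
`Ũ ± (s/2) 𝒜 Ũ`, the cross terms cancel. Once `Ûᵀ Û = I`, the corrector term vanishes. -/

open Matrix

noncomputable section

/-- The skew-symmetric commutator 𝒜_W = H·W·Wᵀ − W·Wᵀ·H. -/
def commA {n N : ℕ} (H : Matrix (Fin n) (Fin n) ℝ) (W : Matrix (Fin n) (Fin N) ℝ) :
    Matrix (Fin n) (Fin n) ℝ :=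
  H * W * Wᵀ - W * Wᵀ * H

theorem commA_transpose {n N : ℕ} {H : Matrix (Fin n) (Fin n) ℝ} (hH : H.IsSymm)
    (W : Matrix (Fin n) (Fin N) ℝ) : (commA H W)ᵀ = -commA H W := by
  simp only [commA, transpose_sub, transpose_mul, transpose_transpose, hH.eq, Matrix.mul_assoc,
    neg_sub]

theorem transpose_mul_self_add_mul_eq_sub_mul {R m p : Type*} [CommRing R] [Fintype m]
    {A : Matrix m m R} (hA : Aᵀ = -A) (M : Matrix m p R) :
    (M + A * M)ᵀ * (M + A * M) = (M - A * M)ᵀ * (M - A * M) := by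
  have cross : (A * M)ᵀ * M = -(Mᵀ * (A * M)) := by
    rw [transpose_mul, hA, Matrix.mul_neg, Matrix.neg_mul, Matrix.mul_assoc]
  simp only [transpose_add, transpose_sub, Matrix.add_mul, Matrix.sub_mul, Matrix.mul_add,
    Matrix.mul_sub, cross]
  abel

theorem transpose_mul_self_eq_of_implicit_midpoint {m p : Type*} [Fintype m]
    {A : Matrix m m ℝ} (hA : Aᵀ = -A) {U Uhat Ut : Matrix m p ℝ} (s : ℝ)
    (hpred : Uhat = U - s • (A * Ut)) (hmid : Ut = (1 / 2 : ℝ) • (U + Uhat)) :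
    Uhatᵀ * Uhat = Uᵀ * U := by
  have hU : U = Ut + (s / 2) • A * Ut := by
    rw [Matrix.smul_mul]
    linear_combination (norm := module) -hmid - (1 / 2 : ℝ) • hpred
  have hUhat : Uhat = Ut - (s / 2) • A * Ut := by
    rw [Matrix.smul_mul]
    linear_combination (norm := module) -hmid + (1 / 2 : ℝ) • hpred
  have hsA : ((s / 2) • A)ᵀ = -((s / 2) • A) := by rw [transpose_smul, hA, smul_neg]
  rw [hU, hUhat, transpose_mul_self_add_mul_eq_sub_mul hsA]

/-- Orthogonality preservation: once some iterate is orthonormal, all subsequent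
iterates are orthonormal. -/
theorem orthogonality_preservation
    {n N : ℕ} (H : Matrix (Fin n) (Fin n) ℝ) (hH : H.IsSymm)
    (U Uhat Ut : ℕ → Matrix (Fin n) (Fin N) ℝ) (s : ℕ → ℝ)
    (hpred : ∀ k, Uhat k = U k - s k • (commA H (Ut k) * Ut k))
    (hmid : ∀ k, Ut k = (1 / 2 : ℝ) • (U k + Uhat k))
    (hcorr : ∀ k, U (k + 1) = Uhat k - s k • (H * Uhat k * (1 - (Uhat k)ᵀ * Uhat k)))
    (k : ℕ) (hk : (U k)ᵀ * U k = 1) :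
    ∀ m ≥ k, (U m)ᵀ * U m = 1 := by
  intro m hm
  induction m, hm using Nat.le_induction with
  | base => exact hk
  | succ m _ ih =>
    have hUhat : (Uhat m)ᵀ * Uhat m = 1 := by
      rw [transpose_mul_self_eq_of_implicit_midpoint (commA_transpose hH (Ut m)) (s m)
        (hpred m) (hmid m), ih]
    have hstep : U (m + 1) = Uhat m := by simp [hcorr m, hUhat]
    rw [hstep, hUhat]
end
end

section
/- Norm preservation of the predictor step (Lemma 3.2, first part): Let H be an n×n real symmetric matrix, U, Ũ, Û n×N real matrices and s ∈ ℝ. If Û = U − s·𝒜_Ũ·Ũ and Ũ = (U + Û)/2, then Ûᵀ·Û = Uᵀ·U. -/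
/-!
Since `Ũ` is the midpoint of `U` and `Û`, the two are `Ũ ∓ (s/2)·𝒜_Ũ·Ũ`. For a skew-symmetric `A`
the Gram matrices of `W + c·A·W` and `W - c·A·W` agree, because the cross terms
`Wᵀ·A·W + (A·W)ᵀ·W` cancel.
-/

open Matrix

noncomputable section

namespace Matrix

variable {m n R : Type*} [Fintype m] [CommRing R]

theorem transpose_mul_mul_self_eq_neg_of_transpose_eq_neg {A : Matrix m m R} (hA : Aᵀ = -A)
    (W : Matrix m n R) : (A * W)ᵀ * W = -(Wᵀ * (A * W)) := by
  rw [transpose_mul, hA, Matrix.mul_assoc, Matrix.neg_mul, Matrix.mul_neg]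

theorem gram_add_smul_mul_eq_gram_sub_smul_mul {A : Matrix m m R} (hA : Aᵀ = -A)
    (W : Matrix m n R) (c : R) :
    (W + c • (A * W))ᵀ * (W + c • (A * W)) = (W - c • (A * W))ᵀ * (W - c • (A * W)) := by
  simp only [transpose_add, transpose_sub, transpose_smul, Matrix.add_mul, Matrix.sub_mul,
    Matrix.mul_add, Matrix.mul_sub, Matrix.smul_mul, Matrix.mul_smul,
    transpose_mul_mul_self_eq_neg_of_transpose_eq_neg hA W]
  module

end Matrix

/-- Norm preservation of the predictor step (Lemma 3.2, first part). -/
theorem predictor_norm_preservation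
    {n N : ℕ} (H : Matrix (Fin n) (Fin n) ℝ) (hH : H.IsSymm)
    (U Ut Uhat : Matrix (Fin n) (Fin N) ℝ) (s : ℝ)
    (hpred : Uhat = U - s • (commA H Ut * Ut))
    (hmid : Ut = (1 / 2 : ℝ) • (U + Uhat)) :
    Uhatᵀ * Uhat = Uᵀ * U := by
  set A := commA H Ut
  have hUhat : Uhat = Ut + (-(s / 2)) • (A * Ut) := by
    linear_combination (norm := module) (1 / 2 : ℝ) • hpred - hmid
  have hU : U = Ut - (-(s / 2)) • (A * Ut) := by
    linear_combination (norm := module) (-1 / 2 : ℝ) • hpred - hmid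
  rw [hUhat, hU]
  exact gram_add_smul_mul_eq_gram_sub_smul_mul (commA_transpose hH Ut) Ut _
end
end

section
/- Exact energy dissipation of the predictor step: Let H be an n×n real symmetric matrix, U, Ũ, Û n×N real matrices and s ∈ ℝ with Û = U − s·𝒜_Ũ·Ũ and Ũ = (U + Û)/2. Then E(U) − E(Û) = (s/2)·‖𝒜_Ũ‖_F². -/
/-!
Write `A = 𝒜_Ũ` and `D = (s/2)·A·Ũ`. The two hypotheses say exactly that `U = Ũ + D` and
`Û = Ũ - D`, so for symmetric `H` the energy difference is the cross term `2·tr(Ũᵀ H D)`,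
i.e. `s·tr(H A Ũ Ũᵀ)`. Since `A = [H, ŨŨᵀ]` is skew-symmetric, cycling the trace gives
`2·tr(H A ŨŨᵀ) = tr(A Aᵀ) = ‖A‖_F²`.
-/
open Matrix

noncomputable section

def frobNorm {m k : ℕ} (A : Matrix (Fin m) (Fin k) ℝ) : ℝ :=
  Real.sqrt (∑ i, ∑ j, (A i j) ^ 2)

def energy {n N : ℕ} (H : Matrix (Fin n) (Fin n) ℝ) (W : Matrix (Fin n) (Fin N) ℝ) : ℝ :=
  (1 / 2 : ℝ) * Matrix.trace (Wᵀ * H * W)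

theorem eq_midpoint_add_and_eq_midpoint_sub {E : Type*} [AddCommGroup E] [Module ℝ E]
    {x y m v : E} {s : ℝ} (hy : y = x - s • v) (hm : m = (1 / 2 : ℝ) • (x + y)) :
    x = m + (s / 2) • v ∧ y = m - (s / 2) • v := by
  subst hy hm
  constructor <;> module

theorem Matrix.two_mul_trace_mul_lie_mul_eq_trace_lie_mul_transpose {n R : Type*} [Fintype n]
    [CommRing R] {H P : Matrix n n R} (hH : H.IsSymm) (hP : P.IsSymm) :
    2 * trace (H * ⁅H, P⁆ * P) = trace (⁅H, P⁆ * ⁅H, P⁆ᵀ) := by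
  set A := ⁅H, P⁆ with hA
  have hA_skew : Aᵀ = -A := by
    rw [hA, Ring.lie_def, transpose_sub, transpose_mul, transpose_mul, hH.eq, hP.eq, neg_sub]
  have hAHP : trace (A * H * P) = -trace (H * A * P) := by
    rw [← trace_transpose, transpose_mul, transpose_mul, hA_skew, hH.eq, hP.eq,
      Matrix.mul_neg, Matrix.mul_neg, trace_neg, trace_mul_comm]
  have hAPH : trace (A * P * H) = trace (H * A * P) := trace_mul_cycle _ _ _
  calc 2 * trace (H * A * P) = trace (A * P * H) - trace (A * H * P) := by
        rw [hAHP, hAPH]; ring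
    _ = trace (A * Aᵀ) := by
        rw [hA_skew, Matrix.mul_neg, hA, Ring.lie_def, trace_neg, Matrix.mul_sub, trace_sub,
          ← Matrix.mul_assoc, ← Matrix.mul_assoc]
        ring

theorem commA_eq_lie {n N : ℕ} (H : Matrix (Fin n) (Fin n) ℝ) (W : Matrix (Fin n) (Fin N) ℝ) :
    commA H W = ⁅H, W * Wᵀ⁆ := by
  rw [commA, Ring.lie_def, Matrix.mul_assoc]

theorem frobNorm_sq {m k : ℕ} (A : Matrix (Fin m) (Fin k) ℝ) :
    frobNorm A ^ 2 = trace (A * Aᵀ) := by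
  rw [frobNorm, Real.sq_sqrt (by positivity)]
  simp [trace, mul_apply, sq]

theorem energy_add_sub_energy_sub {n N : ℕ} {H : Matrix (Fin n) (Fin n) ℝ} (hH : H.IsSymm)
    (W D : Matrix (Fin n) (Fin N) ℝ) :
    energy H (W + D) - energy H (W - D) = 2 * trace (Wᵀ * H * D) := by
  have hcross : trace (Dᵀ * H * W) = trace (Wᵀ * H * D) := by
    rw [← trace_transpose, transpose_mul, transpose_mul, transpose_transpose, hH.eq,
      Matrix.mul_assoc]
  simp only [energy, transpose_add, transpose_sub, Matrix.add_mul, Matrix.sub_mul,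
    Matrix.mul_add, Matrix.mul_sub, trace_add, trace_sub, hcross]
  ring

theorem two_mul_trace_transpose_mul_mul_commA_mul {n N : ℕ} {H : Matrix (Fin n) (Fin n) ℝ}
    (hH : H.IsSymm) (W : Matrix (Fin n) (Fin N) ℝ) :
    2 * trace (Wᵀ * H * (commA H W * W)) = frobNorm (commA H W) ^ 2 := by
  have hP : (W * Wᵀ).IsSymm := by rw [IsSymm, transpose_mul, transpose_transpose]
  have hcycle : trace (Wᵀ * H * (commA H W * W)) = trace (H * commA H W * (W * Wᵀ)) := by
    rw [← Matrix.mul_assoc, trace_mul_comm, trace_mul_comm (H * commA H W)]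
    simp only [Matrix.mul_assoc]
  rw [hcycle, frobNorm_sq, commA_eq_lie,
    two_mul_trace_mul_lie_mul_eq_trace_lie_mul_transpose hH hP]

/-- Exact energy dissipation of the predictor step. -/
theorem predictor_energy_dissipation
    {n N : ℕ} (H : Matrix (Fin n) (Fin n) ℝ) (hH : H.IsSymm)
    (U Ut Uhat : Matrix (Fin n) (Fin N) ℝ) (s : ℝ)
    (hpred : Uhat = U - s • (commA H Ut * Ut))
    (hmid : Ut = (1 / 2 : ℝ) • (U + Uhat)) :
    energy H U - energy H Uhat = s / 2 * frobNorm (commA H Ut) ^ 2 := by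
  obtain ⟨hU, hUhat⟩ := eq_midpoint_add_and_eq_midpoint_sub hpred hmid
  rw [hU, hUhat, energy_add_sub_energy_sub hH, Matrix.mul_smul, trace_smul, smul_eq_mul,
    ← two_mul_trace_transpose_mul_mul_commA_mul hH]
  ring
end
end

section
/- Energy decrease of the corrector step: Let H be an n×n real symmetric negative semidefinite matrix (H ≤ 0 in the Loewner order), Û an n×N real matrix with Ûᵀ·Û ≤ I_N, and s ≥ 0. Set U' = Û − s·H·Û·(I_N − Ûᵀ·Û). Then E(U') ≤ E(Û). -/
/-!
Write `P = I − Ûᵀ Û ⪰ 0` and `D = H Û P`, so that `U' = Û − s D`. Expanding the quadratic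
energy, `E(Û − s D) = E(Û) − s · tr(Ûᵀ H D) + s² · E(D)`.
The first-order coefficient is `tr((HÛ)ᵀ (HÛ) P) = tr((HÛ) P (HÛ)ᵀ) ≥ 0`, since `P ⪰ 0`,
and the second-order one is `E(D) ≤ 0`, since `H ⪯ 0`; hence both correction terms are `≤ 0`.
-/

open Matrix

noncomputable section

/-- Loewner order: X ≤ Y iff Y − X is positive semidefinite. -/
def loewnerLE {k : ℕ} (X Y : Matrix (Fin k) (Fin k) ℝ) : Prop :=
  (Y - X).PosSemidef

theorem Matrix.PosSemidef.trace_conjTranspose_mul_self_mul_nonneg {m n R : Type*} [Fintype m]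
    [Fintype n] [CommRing R] [PartialOrder R] [StarRing R] [AddLeftMono R] {P : Matrix n n R}
    (hP : P.PosSemidef) (A : Matrix m n R) : 0 ≤ (Aᴴ * A * P).trace := by
  rw [Matrix.mul_assoc, trace_mul_comm]
  exact (hP.mul_mul_conjTranspose_same A).trace_nonneg

theorem isSymm_of_loewnerLE_zero {n : ℕ} {H : Matrix (Fin n) (Fin n) ℝ} (hH : loewnerLE H 0) :
    H.IsSymm := by
  simpa using hH.isHermitian.neg

theorem energy_nonpos_of_loewnerLE_zero {n N : ℕ} {H : Matrix (Fin n) (Fin n) ℝ}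
    (hH : loewnerLE H 0) (W : Matrix (Fin n) (Fin N) ℝ) : energy H W ≤ 0 := by
  have h := (hH.conjTranspose_mul_mul_same W).trace_nonneg
  simp only [zero_sub, Matrix.mul_neg, Matrix.neg_mul, trace_neg,
    conjTranspose_eq_transpose_of_trivial] at h
  unfold energy
  linarith

theorem energy_sub_smul {n N : ℕ} {H : Matrix (Fin n) (Fin n) ℝ} (hH : H.IsSymm)
    (W D : Matrix (Fin n) (Fin N) ℝ) (s : ℝ) :
    energy H (W - s • D) = energy H W - s * (Wᵀ * H * D).trace + s ^ 2 * energy H D := by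
  have hcross : (Dᵀ * H * W).trace = (Wᵀ * H * D).trace := by
    rw [← trace_transpose]
    simp only [transpose_mul, transpose_transpose, hH.eq, Matrix.mul_assoc]
  simp only [energy, transpose_sub, transpose_smul, Matrix.sub_mul, Matrix.mul_sub, Matrix.smul_mul,
    Matrix.mul_smul, trace_sub, trace_smul, smul_eq_mul, hcross]
  ring

theorem corrector_energy_decrease_general
    {n N : ℕ} (H : Matrix (Fin n) (Fin n) ℝ)
    (hHneg : loewnerLE H 0)
    (Uhat : Matrix (Fin n) (Fin N) ℝ)
    (hUhat : loewnerLE (Uhatᵀ * Uhat) 1)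
    (s : ℝ) (hs : 0 ≤ s)
    (U' : Matrix (Fin n) (Fin N) ℝ)
    (hcorr : U' = Uhat - s • (H * Uhat * (1 - Uhatᵀ * Uhat))) :
    energy H U' ≤ energy H Uhat := by
  have hH := isSymm_of_loewnerLE_zero hHneg
  have hfirst : (Uhatᵀ * H * (H * Uhat * (1 - Uhatᵀ * Uhat))).trace =
      ((H * Uhat)ᴴ * (H * Uhat) * (1 - Uhatᵀ * Uhat)).trace := by
    simp only [conjTranspose_eq_transpose_of_trivial, transpose_mul, hH.eq, Matrix.mul_assoc]
  have hfirst_nonneg := PosSemidef.trace_conjTranspose_mul_self_mul_nonneg hUhat (H * Uhat)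
  have hsecond_nonpos := energy_nonpos_of_loewnerLE_zero hHneg (H * Uhat * (1 - Uhatᵀ * Uhat))
  rw [hcorr, energy_sub_smul hH, hfirst]
  linarith [mul_nonneg hs hfirst_nonneg,
    mul_nonpos_of_nonneg_of_nonpos (sq_nonneg s) hsecond_nonpos]

/-- Energy decrease of the corrector step. -/
theorem corrector_energy_decrease
    {n N : ℕ} (H : Matrix (Fin n) (Fin n) ℝ) (hH : H.IsSymm)
    (hHneg : loewnerLE H 0)
    (Uhat : Matrix (Fin n) (Fin N) ℝ)
    (hUhat : loewnerLE (Uhatᵀ * Uhat) 1)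
    (s : ℝ) (hs : 0 ≤ s)
    (U' : Matrix (Fin n) (Fin N) ℝ)
    (hcorr : U' = Uhat - s • (H * Uhat * (1 - Uhatᵀ * Uhat))) :
    energy H U' ≤ energy H Uhat :=
  corrector_energy_decrease_general H hHneg Uhat hUhat s hs U' hcorr
end
end

section
/- Lipschitz continuity of U ↦ 𝒜_U·U (Lemma 4.4, first inequality): Let H be an n×n real symmetric matrix with σ_max(H) ≤ M, and let U₁, U₂ be n×N real matrices with σ_max(U₁) ≤ α and σ_max(U₂) ≤ α. Then ‖𝒜_{U₁}·U₁ − 𝒜_{U₂}·U₂‖_F ≤ 6·α²·M·‖U₁ − U₂‖_F. -/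
/-!
Write `𝒜_U U = H (U Uᵀ U) - U Uᵀ (H U)`. Both pieces are triple products, and a difference of
triple products telescopes as
`X₁Y₁Z₁ - X₂Y₂Z₂ = (X₁ - X₂)Y₁Z₁ + X₂(Y₁ - Y₂)Z₁ + X₂Y₂(Z₁ - Z₂)`.
Bounding each term with the mixed inequality `‖AB‖_F ≤ σ_max(A) ‖B‖_F` (and its transpose) gives
`3α²M ‖U₁ - U₂‖_F` for each piece.
-/

open Matrix

noncomputable section

/-- Largest singular value (ℓ²-operator norm) of a real matrix. -/
def sigmaMax {m k : ℕ} (A : Matrix (Fin m) (Fin k) ℝ) : ℝ :=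
  ‖LinearMap.toContinuousLinearMap (Matrix.toEuclideanLin A)‖

variable {m k l p : ℕ}

section Frobenius

attribute [local instance] Matrix.frobeniusNormedAddCommGroup

lemma frobNorm_eq_norm (A : Matrix (Fin m) (Fin k) ℝ) : frobNorm A = ‖A‖ := by
  rw [frobenius_norm_def, ← Real.sqrt_eq_rpow, frobNorm]
  simp only [Real.norm_eq_abs, Real.rpow_two, sq_abs]

lemma frobNorm_nonneg (A : Matrix (Fin m) (Fin k) ℝ) : 0 ≤ frobNorm A :=
  Real.sqrt_nonneg _

lemma frobNorm_transpose (A : Matrix (Fin m) (Fin k) ℝ) : frobNorm Aᵀ = frobNorm A := by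
  simp only [frobNorm_eq_norm, frobenius_norm_transpose]

lemma frobNorm_add_le (A B : Matrix (Fin m) (Fin k) ℝ) :
    frobNorm (A + B) ≤ frobNorm A + frobNorm B := by
  simpa only [frobNorm_eq_norm] using norm_add_le A B

lemma frobNorm_sub_le (A B : Matrix (Fin m) (Fin k) ℝ) :
    frobNorm (A - B) ≤ frobNorm A + frobNorm B := by
  simpa only [frobNorm_eq_norm] using norm_sub_le A B

end Frobenius

section L2Operator

open scoped Matrix.Norms.L2Operator

lemma sigmaMax_eq_norm (A : Matrix (Fin m) (Fin k) ℝ) : sigmaMax A = ‖A‖ := by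
  rw [l2_opNorm_def]; rfl

lemma sigmaMax_nonneg (A : Matrix (Fin m) (Fin k) ℝ) : 0 ≤ sigmaMax A := by
  rw [sigmaMax_eq_norm]; exact norm_nonneg _

lemma sigmaMax_transpose (A : Matrix (Fin m) (Fin k) ℝ) : sigmaMax Aᵀ = sigmaMax A := by
  rw [sigmaMax_eq_norm, sigmaMax_eq_norm, ← conjTranspose_eq_transpose_of_trivial,
    l2_opNorm_conjTranspose]

lemma sigmaMax_mul_le (A : Matrix (Fin m) (Fin k) ℝ) (B : Matrix (Fin k) (Fin l) ℝ) :
    sigmaMax (A * B) ≤ sigmaMax A * sigmaMax B := by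
  simpa only [sigmaMax_eq_norm] using l2_opNorm_mul A B

lemma frobNorm_eq_sqrt_sum_norm_col_sq (B : Matrix (Fin k) (Fin l) ℝ) :
    frobNorm B = √(∑ j, ‖WithLp.toLp 2 (Bᵀ j)‖ ^ 2) := by
  rw [frobNorm, Finset.sum_comm]
  simp [EuclideanSpace.norm_sq_eq]

lemma frobNorm_mul_le_sigmaMax_mul (A : Matrix (Fin m) (Fin k) ℝ) (B : Matrix (Fin k) (Fin l) ℝ) :
    frobNorm (A * B) ≤ sigmaMax A * frobNorm B := by
  have hcol (j : Fin l) : ‖WithLp.toLp 2 ((A * B)ᵀ j)‖ ≤ sigmaMax A * ‖WithLp.toLp 2 (Bᵀ j)‖ := by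
    have hmulVec : (A * B)ᵀ j = A *ᵥ Bᵀ j := rfl
    simpa [hmulVec, sigmaMax_eq_norm] using l2_opNorm_mulVec A (WithLp.toLp 2 (Bᵀ j))
  rw [frobNorm_eq_sqrt_sum_norm_col_sq, frobNorm_eq_sqrt_sum_norm_col_sq,
    ← Real.sqrt_sq (sigmaMax_nonneg A), ← Real.sqrt_mul (sq_nonneg _), Finset.mul_sum]
  gcongr with j
  rw [← mul_pow]
  gcongr
  exact hcol j

lemma frobNorm_mul_le_mul_sigmaMax (A : Matrix (Fin m) (Fin k) ℝ) (B : Matrix (Fin k) (Fin l) ℝ) :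
    frobNorm (A * B) ≤ frobNorm A * sigmaMax B := by
  rw [← frobNorm_transpose, transpose_mul, ← frobNorm_transpose A, ← sigmaMax_transpose B, mul_comm]
  exact frobNorm_mul_le_sigmaMax_mul _ _

end L2Operator

lemma frobNorm_mul_mul_sub_mul_mul_le
    (X₁ X₂ : Matrix (Fin m) (Fin k) ℝ) (Y₁ Y₂ : Matrix (Fin k) (Fin l) ℝ)
    (Z₁ Z₂ : Matrix (Fin l) (Fin p) ℝ) :
    frobNorm (X₁ * Y₁ * Z₁ - X₂ * Y₂ * Z₂) ≤
      frobNorm (X₁ - X₂) * sigmaMax Y₁ * sigmaMax Z₁ + sigmaMax X₂ * frobNorm (Y₁ - Y₂) * sigmaMax Z₁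
        + sigmaMax X₂ * sigmaMax Y₂ * frobNorm (Z₁ - Z₂) := by
  have htelescope : X₁ * Y₁ * Z₁ - X₂ * Y₂ * Z₂ =
      (X₁ - X₂) * Y₁ * Z₁ + X₂ * (Y₁ - Y₂) * Z₁ + X₂ * Y₂ * (Z₁ - Z₂) := by
    simp only [Matrix.sub_mul, Matrix.mul_sub]; abel
  have hX : frobNorm ((X₁ - X₂) * Y₁ * Z₁) ≤ frobNorm (X₁ - X₂) * sigmaMax Y₁ * sigmaMax Z₁ :=
    (frobNorm_mul_le_mul_sigmaMax _ _).trans <| mul_le_mul_of_nonneg_right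
      (frobNorm_mul_le_mul_sigmaMax _ _) (sigmaMax_nonneg _)
  have hY : frobNorm (X₂ * (Y₁ - Y₂) * Z₁) ≤ sigmaMax X₂ * frobNorm (Y₁ - Y₂) * sigmaMax Z₁ :=
    (frobNorm_mul_le_mul_sigmaMax _ _).trans <| mul_le_mul_of_nonneg_right
      (frobNorm_mul_le_sigmaMax_mul _ _) (sigmaMax_nonneg _)
  have hZ : frobNorm (X₂ * Y₂ * (Z₁ - Z₂)) ≤ sigmaMax X₂ * sigmaMax Y₂ * frobNorm (Z₁ - Z₂) :=
    (frobNorm_mul_le_sigmaMax_mul _ _).trans <| mul_le_mul_of_nonneg_right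
      (sigmaMax_mul_le _ _) (frobNorm_nonneg _)
  rw [htelescope]
  exact (frobNorm_add_le _ _).trans (add_le_add ((frobNorm_add_le _ _).trans (add_le_add hX hY)) hZ)

lemma frobNorm_mul_transpose_mul_sub_le {α c : ℝ}
    (U₁ U₂ : Matrix (Fin m) (Fin k) ℝ) (Z₁ Z₂ : Matrix (Fin m) (Fin p) ℝ)
    (hU₁ : sigmaMax U₁ ≤ α) (hU₂ : sigmaMax U₂ ≤ α) (hZ₁ : sigmaMax Z₁ ≤ c) :
    frobNorm (U₁ * U₁ᵀ * Z₁ - U₂ * U₂ᵀ * Z₂) ≤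
      2 * α * c * frobNorm (U₁ - U₂) + α ^ 2 * frobNorm (Z₁ - Z₂) := by
  have hα : 0 ≤ α := (sigmaMax_nonneg U₁).trans hU₁
  have hD : 0 ≤ frobNorm (U₁ - U₂) := frobNorm_nonneg _
  refine (frobNorm_mul_mul_sub_mul_mul_le _ _ _ _ _ _).trans ?_
  rw [sigmaMax_transpose, sigmaMax_transpose, ← transpose_sub, frobNorm_transpose]
  calc _ ≤ frobNorm (U₁ - U₂) * α * c + α * frobNorm (U₁ - U₂) * c
          + α * α * frobNorm (Z₁ - Z₂) := by
        gcongr <;> apply_rules [sigmaMax_nonneg, frobNorm_nonneg]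
    _ = 2 * α * c * frobNorm (U₁ - U₂) + α ^ 2 * frobNorm (Z₁ - Z₂) := by ring

theorem commA_mul_lipschitz_general
    {n N : ℕ} (H : Matrix (Fin n) (Fin n) ℝ)
    (M α : ℝ) (hM : sigmaMax H ≤ M)
    (U₁ U₂ : Matrix (Fin n) (Fin N) ℝ)
    (hU₁ : sigmaMax U₁ ≤ α) (hU₂ : sigmaMax U₂ ≤ α) :
    frobNorm (commA H U₁ * U₁ - commA H U₂ * U₂) ≤ 6 * α ^ 2 * M * frobNorm (U₁ - U₂) := by
  have hsplit : commA H U₁ * U₁ - commA H U₂ * U₂ =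
      H * (U₁ * U₁ᵀ * U₁ - U₂ * U₂ᵀ * U₂) - (U₁ * U₁ᵀ * (H * U₁) - U₂ * U₂ᵀ * (H * U₂)) := by
    simp only [commA, Matrix.sub_mul, Matrix.mul_sub, Matrix.mul_assoc]
    abel
  have hM₀ : 0 ≤ M := (sigmaMax_nonneg H).trans hM
  have hHU₁ : sigmaMax (H * U₁) ≤ M * α :=
    (sigmaMax_mul_le H U₁).trans (mul_le_mul hM hU₁ (sigmaMax_nonneg _) hM₀)
  have hHD : frobNorm (H * U₁ - H * U₂) ≤ M * frobNorm (U₁ - U₂) := by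
    rw [← Matrix.mul_sub]
    exact (frobNorm_mul_le_sigmaMax_mul _ _).trans
      (mul_le_mul_of_nonneg_right hM (frobNorm_nonneg _))
  calc frobNorm (commA H U₁ * U₁ - commA H U₂ * U₂)
      ≤ sigmaMax H * frobNorm (U₁ * U₁ᵀ * U₁ - U₂ * U₂ᵀ * U₂)
        + frobNorm (U₁ * U₁ᵀ * (H * U₁) - U₂ * U₂ᵀ * (H * U₂)) := by
        rw [hsplit]
        exact (frobNorm_sub_le _ _).trans (add_le_add_left (frobNorm_mul_le_sigmaMax_mul _ _) _)
    _ ≤ M * (2 * α * α * frobNorm (U₁ - U₂) + α ^ 2 * frobNorm (U₁ - U₂))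
        + (2 * α * (M * α) * frobNorm (U₁ - U₂) + α ^ 2 * (M * frobNorm (U₁ - U₂))) := by
        gcongr
        · exact frobNorm_nonneg _
        · exact frobNorm_mul_transpose_mul_sub_le U₁ U₂ U₁ U₂ hU₁ hU₂ hU₁
        · exact (frobNorm_mul_transpose_mul_sub_le U₁ U₂ _ _ hU₁ hU₂ hHU₁).trans (by gcongr)
    _ = 6 * α ^ 2 * M * frobNorm (U₁ - U₂) := by ring

/-- Lipschitz continuity of U ↦ 𝒜_U·U (Lemma 4.4, first inequality). -/
theorem commA_mul_lipschitz
    {n N : ℕ} (H : Matrix (Fin n) (Fin n) ℝ) (hH : H.IsSymm)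
    (M α : ℝ) (hM : sigmaMax H ≤ M)
    (U₁ U₂ : Matrix (Fin n) (Fin N) ℝ)
    (hU₁ : sigmaMax U₁ ≤ α) (hU₂ : sigmaMax U₂ ≤ α) :
    frobNorm (commA H U₁ * U₁ - commA H U₂ * U₂) ≤ 6 * α ^ 2 * M * frobNorm (U₁ - U₂) :=
  commA_mul_lipschitz_general H M α hM U₁ U₂ hU₁ hU₂
end
end
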